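/- arXiv:1810.02309 — 3 statements merged into one kernel-verified Lean document; each statement's English description precedes it below -/
import Mathlib

section
/- Let M be a kn × ℓn real matrix partitioned into k×ℓ blocks M_{ij}, each of size n×n, such that each block satisfies rank(Z₁ M_{ij} − M_{ij} Z₋₁) ≤ r, where Z₁ and Z₋₁ are the n×n unit-f-circulant matrices with f = 1 and f = −1 respectively. Then, with Z₁ of size kn×kn and Z₋₁ of size ℓn×ℓn, rank(Z₁ M − M Z₋₁) ≤ r·k·ℓ + 2k + 2ℓ. That is, a block matrix of Toeplitz-like matrices of displacement rank r is Toeplitz-like with displacement rank at most rkℓ + 2k + 2ℓ. -/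
/-! Reindex `Fin (k * n)` as `Fin k × Fin n`. Away from the first row of each block, `Z_f` of
size `kn` agrees with the block-diagonal matrix `1 ⊗ₖ Z_f` of size `n`, so the two differ by a
matrix with at most `k` nonzero rows. Replacing both displacement operators by their
block-diagonal versions therefore changes the displacement rank by at most `k + ℓ`, and the
block-diagonal displacement of `M` has the blocks `Z₁ M_ij - M_ij Z₋₁`, whose ranks add up to at
most `r k ℓ`. -/

open Matrix

/-- The `n × n` unit-f-circulant matrix `Z_f`: ones on the subdiagonal
(`(Z_f)_{i+1,i} = 1`), `f` in the top-right corner (`(Z_f)_{0,n-1} = f`),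
and zeros elsewhere. -/
def Zf (n : ℕ) (f : ℝ) : Matrix (Fin n) (Fin n) ℝ :=
  Matrix.of fun i j =>
    if (i : ℕ) = (j : ℕ) + 1 then 1 else if (i : ℕ) = 0 ∧ (j : ℕ) = n - 1 then f else 0

theorem block_index_lt {k n : ℕ} (i : Fin k) (a : Fin n) :
    (i : ℕ) * n + (a : ℕ) < k * n := by
  nlinarith [i.isLt, a.isLt]

open Kronecker

namespace Matrix

section Rank

variable {ι κ m n K : Type*} [Fintype n] [Field K]

theorem rank_add_le (A B : Matrix m n K) : (A + B).rank ≤ A.rank + B.rank := by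
  rw [rank, rank, rank, mulVecLin_add]
  exact (Submodule.finrank_mono (LinearMap.range_add_le _ _)).trans
    (Submodule.finrank_add_le_finrank_add_finrank _ _)

theorem rank_neg (A : Matrix m n K) : (-A).rank = A.rank := by
  rw [rank, rank, show (-A).mulVecLin = -A.mulVecLin from LinearMap.ext (neg_mulVec · A),
    LinearMap.range_neg]

theorem rank_sub_le (A B : Matrix m n K) : (A - B).rank ≤ A.rank + B.rank := by
  simpa only [sub_eq_add_neg, rank_neg] using rank_add_le A (-B)

theorem rank_sum_le (s : Finset ι) (A : ι → Matrix m n K) :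
    (∑ i ∈ s, A i).rank ≤ ∑ i ∈ s, (A i).rank := by
  classical
  induction s using Finset.induction_on with
  | empty => simp
  | insert i s hi ih =>
    rw [Finset.sum_insert hi, Finset.sum_insert hi]
    exact (rank_add_le _ _).trans (Nat.add_le_add_left ih _)

theorem rank_le_sum_rank_submatrix_prodMk [Fintype ι] [Fintype κ] [Fintype m]
    (A : Matrix (ι × m) (κ × n) K) :
    A.rank ≤ ∑ i, ∑ j, (A.submatrix (Prod.mk i) (Prod.mk j)).rank := by
  classical
  let P (i : ι) : Matrix (ι × m) m K := (1 : Matrix (ι × m) (ι × m) K).submatrix id (Prod.mk i)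
  let Q (j : κ) : Matrix n (κ × n) K := (1 : Matrix (κ × n) (κ × n) K).submatrix (Prod.mk j) id
  have hA : A = ∑ i, ∑ j, P i * A.submatrix (Prod.mk i) (Prod.mk j) * Q j := by
    ext ⟨i, a⟩ ⟨j, b⟩
    simp [P, Q, Matrix.sum_apply, mul_apply, one_apply, ite_and]
  calc A.rank = (∑ i, ∑ j, P i * A.submatrix (Prod.mk i) (Prod.mk j) * Q j).rank := by
        rw [← hA]
    _ ≤ ∑ i, ∑ j, (P i * A.submatrix (Prod.mk i) (Prod.mk j) * Q j).rank :=
      (rank_sum_le _ _).trans (Finset.sum_le_sum fun i _ => rank_sum_le _ _)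
    _ ≤ _ := Finset.sum_le_sum fun i _ => Finset.sum_le_sum fun j _ =>
      (rank_mul_le_left _ _).trans (rank_mul_le_right _ _)

theorem rank_mul_sub_mul_le [Fintype m] (A A' : Matrix m m K) (B B' : Matrix n n K)
    (X : Matrix m n K) :
    (A * X - X * B).rank ≤ (A' * X - X * B').rank + (A - A').rank + (B - B').rank := by
  have hsplit : A * X - X * B = (A' * X - X * B') + ((A - A') * X - X * (B - B')) := by
    rw [Matrix.sub_mul, Matrix.mul_sub]; abel
  rw [hsplit, add_assoc]
  exact (rank_add_le _ _).trans (Nat.add_le_add_left ((rank_sub_le _ _).trans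
    (Nat.add_le_add (rank_mul_le_left _ _) (rank_mul_le_right _ _))) _)

end Rank

section Kronecker

variable {ι κ l l' m n R : Type*} [Fintype ι] [Fintype κ] [Fintype m] [Fintype n]
  [DecidableEq ι] [DecidableEq κ] [Semiring R]

theorem submatrix_one_kronecker_mul_prodMk (A : Matrix m m R) (X : Matrix (ι × m) l R) (i : ι)
    (c : l' → l) :
    ((1 : Matrix ι ι R) ⊗ₖ A * X).submatrix (Prod.mk i) c = A * X.submatrix (Prod.mk i) c := by
  ext a x
  simp [mul_apply, Fintype.sum_prod_type, one_apply]

theorem submatrix_mul_one_kronecker_prodMk (X : Matrix l (κ × n) R) (B : Matrix n n R)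
    (r : l' → l) (j : κ) :
    (X * (1 : Matrix κ κ R) ⊗ₖ B).submatrix r (Prod.mk j) = X.submatrix r (Prod.mk j) * B := by
  ext x b
  simp [mul_apply, Fintype.sum_prod_type, one_apply]

end Kronecker

variable {ι κ m n K : Type*} [Fintype ι] [Fintype κ] [DecidableEq ι] [DecidableEq κ]
  [Fintype m] [Fintype n] [Field K]

theorem rank_one_kronecker_mul_sub_mul_one_kronecker_le {r : ℕ} (A : Matrix m m K)
    (B : Matrix n n K) (X : Matrix (ι × m) (κ × n) K)
    (hX : ∀ i j, (A * X.submatrix (Prod.mk i) (Prod.mk j) -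
      X.submatrix (Prod.mk i) (Prod.mk j) * B).rank ≤ r) :
    ((1 : Matrix ι ι K) ⊗ₖ A * X - X * (1 : Matrix κ κ K) ⊗ₖ B).rank ≤
      Fintype.card ι * Fintype.card κ * r := by
  have hblock : ∀ i j, ((1 : Matrix ι ι K) ⊗ₖ A * X - X * (1 : Matrix κ κ K) ⊗ₖ B).submatrix
      (Prod.mk i) (Prod.mk j) = A * X.submatrix (Prod.mk i) (Prod.mk j) -
        X.submatrix (Prod.mk i) (Prod.mk j) * B := by
    intro i j
    rw [← submatrix_one_kronecker_mul_prodMk, ← submatrix_mul_one_kronecker_prodMk]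
    rfl
  calc _ ≤ _ := rank_le_sum_rank_submatrix_prodMk _
    _ ≤ ∑ _i : ι, ∑ _j : κ, r := Finset.sum_le_sum fun i _ => Finset.sum_le_sum fun j _ =>
        (hblock i j).symm ▸ hX i j
    _ = _ := by simp [mul_assoc]

end Matrix

theorem Zf_finProdFinEquiv_of_ne_zero {k n : ℕ} [NeZero n] (f : ℝ) {p : Fin k × Fin n}
    (hp : p.2 ≠ 0) (q : Fin k × Fin n) :
    Zf (k * n) f (finProdFinEquiv p) (finProdFinEquiv q) =
      ((1 : Matrix (Fin k) (Fin k) ℝ) ⊗ₖ Zf n f) p q := by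
  obtain ⟨⟨i, hi⟩, ⟨a, ha⟩⟩ := p
  obtain ⟨⟨j, hj⟩, ⟨b, hb⟩⟩ := q
  have ha0 : a ≠ 0 := fun h => hp (Fin.ext h)
  have hsubdiag : a + n * i = b + n * j + 1 ↔ i = j ∧ a = b + 1 := by
    constructor
    · intro h
      have hij : i = j := by
        have h1 : n * i < n * (j + 1) := by rw [mul_add, mul_one]; omega
        have h2 : n * j < n * (i + 1) := by rw [mul_add, mul_one]; omega
        have := Nat.lt_of_mul_lt_mul_left h1
        have := Nat.lt_of_mul_lt_mul_left h2
        omega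
      subst hij
      omega
    · rintro ⟨rfl, rfl⟩
      ring
  simp only [Zf, of_apply, kroneckerMap_apply, one_apply, finProdFinEquiv_apply_val, hsubdiag,
    Fin.mk.injEq]
  by_cases hij : i = j <;> simp [hij, ha0]

theorem rank_Zf_submatrix_sub_one_kronecker_le (k n : ℕ) [NeZero n] (f : ℝ) :
    ((Zf (k * n) f).submatrix finProdFinEquiv finProdFinEquiv -
      (1 : Matrix (Fin k) (Fin k) ℝ) ⊗ₖ Zf n f).rank ≤ k := by
  have hsupp : Function.support (((Zf (k * n) f).submatrix finProdFinEquiv finProdFinEquiv -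
      (1 : Matrix (Fin k) (Fin k) ℝ) ⊗ₖ Zf n f).row) ⊆
        ↑(Finset.univ ×ˢ {0} : Finset (Fin k × Fin n)) := by
    intro p hp
    by_contra hp0
    refine hp (funext fun q => ?_)
    have hp2 : p.2 ≠ 0 := fun h =>
      hp0 (Finset.mem_product.mpr ⟨Finset.mem_univ _, Finset.mem_singleton.mpr h⟩)
    rw [row_apply, Matrix.sub_apply, submatrix_apply, Zf_finProdFinEquiv_of_ne_zero f hp2,
      sub_self, Pi.zero_apply]
  simpa using rank_le_card_of_support_subset _ _ hsupp

/-- **Block matrices of Toeplitz-like matrices are Toeplitz-like.**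
If each `n × n` block of the `kn × ℓn` matrix `M` has displacement rank at most `r` with
respect to `(Z₁, Z₋₁)`, then `M` has displacement rank at most `r*k*ℓ + 2*k + 2*ℓ` with
respect to `(Z₁, Z₋₁)` of the appropriate sizes. -/
theorem toeplitz_like_block (n k ℓ r : ℕ)
    (M : Matrix (Fin (k * n)) (Fin (ℓ * n)) ℝ)
    (h : ∀ (i : Fin k) (j : Fin ℓ),
      (Zf n 1 *
          Matrix.of (fun a b : Fin n =>
            M ⟨(i : ℕ) * n + a, block_index_lt i a⟩ ⟨(j : ℕ) * n + b, block_index_lt j b⟩) -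
        Matrix.of (fun a b : Fin n =>
            M ⟨(i : ℕ) * n + a, block_index_lt i a⟩ ⟨(j : ℕ) * n + b, block_index_lt j b⟩) *
          Zf n (-1)).rank ≤ r) :
    (Zf (k * n) 1 * M - M * Zf (ℓ * n) (-1)).rank ≤ r * k * ℓ + 2 * k + 2 * ℓ := by
  rcases Nat.eq_zero_or_pos n with rfl | hn
  · simp
  have : NeZero n := ⟨hn.ne'⟩
  set M' := M.submatrix finProdFinEquiv finProdFinEquiv
  have hblocks : ∀ i j, M'.submatrix (Prod.mk i) (Prod.mk j) = Matrix.of (fun a b : Fin n =>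
      M ⟨(i : ℕ) * n + a, block_index_lt i a⟩ ⟨(j : ℕ) * n + b, block_index_lt j b⟩) := by
    intro i j
    ext a b
    simp only [M', submatrix_apply, of_apply]
    congr 1 <;> exact Fin.ext (by simp only [finProdFinEquiv_apply_val]; ring)
  calc (Zf (k * n) 1 * M - M * Zf (ℓ * n) (-1)).rank
      = ((Zf (k * n) 1).submatrix finProdFinEquiv finProdFinEquiv * M' -
          M' * (Zf (ℓ * n) (-1)).submatrix finProdFinEquiv finProdFinEquiv).rank := by
        rw [← rank_submatrix _ finProdFinEquiv finProdFinEquiv, submatrix_mul_equiv,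
          submatrix_mul_equiv]
        rfl
    _ ≤ ((1 : Matrix (Fin k) (Fin k) ℝ) ⊗ₖ Zf n 1 * M' -
          M' * (1 : Matrix (Fin ℓ) (Fin ℓ) ℝ) ⊗ₖ Zf n (-1)).rank + k + ℓ :=
        (rank_mul_sub_mul_le _ _ _ _ _).trans (add_le_add_three le_rfl
          (rank_Zf_submatrix_sub_one_kronecker_le k n 1)
          (rank_Zf_submatrix_sub_one_kronecker_le ℓ n (-1)))
    _ ≤ k * ℓ * r + k + ℓ := by
        gcongr
        simpa using rank_one_kronecker_mul_sub_mul_one_kronecker_le _ _ M'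
          fun i j => hblocks i j ▸ h i j
    _ ≤ r * k * ℓ + 2 * k + 2 * ℓ := by nlinarith
end

section
/- Let t : {−(n−1),…,n−1} → ℝ and let T be the n×n Toeplitz matrix with entries T_{ij} = t_{i−j}. Then rank(Z₁ T − T Z₋₁) ≤ 2, where Z₁ and Z₋₁ are the n×n unit-f-circulant matrices with f = 1 and f = −1 respectively. That is, every Toeplitz matrix has displacement rank at most 2 with respect to (Z₁, Z₋₁). -/
/-!
For a Toeplitz matrix `T = (t_{i-j})` and any scalars `f, g`, left multiplication by `Z_f` shifts
the rows down and right multiplication by `Z_g` shifts the columns left, so away from the first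
row and the last column both `Z_f T` and `T Z_g` have entry `t_{i-1-j}`. The displacement
`Z_f T - T Z_g` is therefore supported on one row and one column, and such a matrix factors
through a space of dimension 2.
-/

open Matrix

namespace Matrix

variable {m n R : Type*} [Fintype n] [CommSemiring R] [StrongRankCondition R]

theorem rank_le_two_of_eq_zero_off_row_col (A : Matrix m n R) (i₀ : m) (j₀ : n)
    (hA : ∀ i j, i ≠ i₀ → j ≠ j₀ → A i j = 0) : A.rank ≤ 2 := by
  classical
  let U : Matrix m (Fin 2) R :=
    of fun i => ![(Pi.single i₀ 1 : m → R) i, if i = i₀ then 0 else A i j₀]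
  let V : Matrix (Fin 2) n R := of ![A i₀, Pi.single j₀ 1]
  have hUV : A = U * V := by
    ext i j
    by_cases hi : i = i₀
    · subst hi; simp [U, V, mul_apply, Fin.sum_univ_two]
    by_cases hj : j = j₀
    · subst hj; simp [U, V, mul_apply, Fin.sum_univ_two, hi]
    · simp [U, V, mul_apply, Fin.sum_univ_two, hi, hj, hA i j hi hj]
  calc A.rank = (U * V).rank := by rw [← hUV]
    _ ≤ U.rank := rank_mul_le_left U V
    _ ≤ 2 := (rank_le_card_width U).trans (by simp)

end Matrix

section Zf

variable {n : ℕ} (f : ℝ)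

theorem Zf_mul_apply_of_val_eq_succ {o : Type*} (M : Matrix (Fin n) o ℝ) {i k : Fin n}
    (hik : (i : ℕ) = k + 1) (j : o) : (Zf n f * M) i j = M k j := by
  rw [mul_apply, Finset.sum_eq_single k]
  · simp [Zf, hik]
  · intro l _ hl
    have hil : (i : ℕ) ≠ l + 1 := fun h => hl (Fin.ext (by omega))
    have hi : (i : ℕ) ≠ 0 := by omega
    simp [Zf, hil, hi]
  · simp

theorem mul_Zf_apply_of_val_eq_succ {l : Type*} (M : Matrix l (Fin n) ℝ) {j k : Fin n}
    (hjk : (k : ℕ) = j + 1) (i : l) : (M * Zf n f) i j = M i k := by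
  rw [mul_apply, Finset.sum_eq_single k]
  · simp [Zf, hjk]
  · intro p _ hp
    have hpj : (p : ℕ) ≠ j + 1 := fun h => hp (Fin.ext (by omega))
    have hj : (j : ℕ) ≠ n - 1 := by omega
    simp [Zf, hpj, hj]
  · simp

end Zf

theorem Zf_mul_toeplitz_sub_toeplitz_mul_Zf_apply_eq_zero {n : ℕ} (f g : ℝ) (t : ℤ → ℝ)
    {i j : Fin n} (hi : (i : ℕ) ≠ 0) (hj : (j : ℕ) ≠ n - 1) :
    (Zf n f * Matrix.of (fun i j : Fin n => t ((i : ℤ) - (j : ℤ))) -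
      Matrix.of (fun i j : Fin n => t ((i : ℤ) - (j : ℤ))) * Zf n g) i j = 0 := by
  have hj' : (j : ℕ) + 1 < n := by omega
  rw [Matrix.sub_apply,
    Zf_mul_apply_of_val_eq_succ f _ (k := ⟨i - 1, by omega⟩) (by simp; omega),
    mul_Zf_apply_of_val_eq_succ g _ (k := ⟨j + 1, hj'⟩) rfl, sub_eq_zero, of_apply, of_apply]
  congr 1
  push_cast [Nat.cast_sub (Nat.one_le_iff_ne_zero.mpr hi)]
  ring

/-- **Toeplitz matrices have displacement rank at most 2 with respect to `(Z₁, Z₋₁)`.** -/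
theorem toeplitz_displacement_rank (n : ℕ) (t : ℤ → ℝ) :
    (Zf n 1 * Matrix.of (fun i j : Fin n => t ((i : ℤ) - (j : ℤ))) -
      Matrix.of (fun i j : Fin n => t ((i : ℤ) - (j : ℤ))) * Zf n (-1)).rank ≤ 2 := by
  rcases n with _ | m
  · exact (rank_le_width _).trans (Nat.zero_le 2)
  exact rank_le_two_of_eq_zero_off_row_col _ 0 (Fin.last m) fun i j hi hj =>
    Zf_mul_toeplitz_sub_toeplitz_mul_Zf_apply_eq_zero 1 (-1) t (Fin.val_ne_iff.mpr hi)
      (Fin.val_ne_iff.mpr hj)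
end

section
/- Let p₀, p₁, …, p_{m−1} be real polynomials satisfying the three-term recurrence p_{i+1}(X) = (a_i X + b_i) p_i(X) + c_i p_{i−1}(X) for 0 ≤ i ≤ m−2 (with the convention p_{−1} = 0), where a_i ≠ 0 for all i. Let λ₀,…,λ_{n−1} ∈ ℝ and let M be the m×n polynomial transform matrix with entries M_{ij} = p_i(λ_j). Then there exists a tridiagonal m×m real matrix A (i.e., A_{ij} = 0 whenever |i−j| > 1) such that A·M − M·diag(λ₀,…,λ_{n−1}) is nonzero only in its last row; in particular rank(A·M − M·diag(λ)) ≤ 1, so every orthogonal polynomial transform has displacement rank 1 with respect to a tridiagonal and a diagonal operator. -/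
/-!
Rewriting the recurrence as `X pᵢ = aᵢ⁻¹ (pᵢ₊₁ - bᵢ pᵢ - cᵢ pᵢ₋₁)` shows that the
tridiagonal (Jacobi) matrix `A` with these coefficients satisfies `A v(x) = x v(x)` for
`v(x) = (p₀(x), …, p_{m-1}(x))` in every row but the last, the only one that would
involve `p_m`. Applied to the columns `v(λⱼ)` of `M` this gives `A M = M diag(λ)` off the
last row, and a matrix supported on a single row has rank at most one.
-/

open Matrix Polynomial

theorem Matrix.rank_le_card_of_forall_notMem_eq_zero {ι κ K : Type*} [Fintype ι] [Fintype κ]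
    [Field K] (D : Matrix ι κ K) (s : Finset ι) (h : ∀ i ∉ s, D i = 0) :
    D.rank ≤ s.card := by
  classical
  set P : Matrix ι ι K := diagonal fun i => if i ∈ s then 1 else 0
  have hPD : P * D = D := by
    ext i j
    by_cases hi : i ∈ s <;> simp [P, hi, h]
  calc D.rank = (P * D).rank := by rw [hPD]
    _ ≤ P.rank := rank_mul_le_left _ _
    _ = s.card := by simp [P, rank_diagonal]

section Jacobi

variable {K : Type*} [Field K]

def jacobiMatrix (m : ℕ) (a b c : ℕ → K) : Matrix (Fin m) (Fin m) K :=
  Matrix.of fun i j =>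
    if (j : ℕ) = i + 1 then (a i)⁻¹
    else if j = i then -b i / a i
    else if (j : ℕ) + 1 = i then -c i / a i
    else 0

variable {m : ℕ}

theorem jacobiMatrix_apply_eq_zero (a b c : ℕ → K) {i j : Fin m}
    (hij : 1 < ((i : ℤ) - j).natAbs) : jacobiMatrix m a b c i j = 0 := by
  have : ¬ (j : ℕ) = i + 1 ∧ j ≠ i ∧ ¬ (j : ℕ) + 1 = i := by omega
  simp_all [jacobiMatrix]

theorem jacobiMatrix_row_eq (a b c : ℕ → K) {i : Fin m} (hi : (i : ℕ) + 1 < m) :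
    jacobiMatrix m a b c i =
      Pi.single ⟨i + 1, hi⟩ (a i)⁻¹ + Pi.single i (-b i / a i) +
        if h : 1 ≤ (i : ℕ) then Pi.single ⟨i - 1, by omega⟩ (-c i / a i) else 0 := by
  ext j
  by_cases h : 1 ≤ (i : ℕ) <;>
    simp only [h, dite_true, dite_false, jacobiMatrix, of_apply, Pi.add_apply, Pi.single_apply,
      Fin.ext_iff, Pi.zero_apply] <;>
    split_ifs <;> first | omega | ring

theorem jacobiMatrix_dotProduct (a b c : ℕ → K) (v : Fin m → K) {i : Fin m}
    (hi : (i : ℕ) + 1 < m) :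
    jacobiMatrix m a b c i ⬝ᵥ v =
      (a i)⁻¹ * (v ⟨i + 1, hi⟩ - b i * v i -
        c i * if h : 1 ≤ (i : ℕ) then v ⟨i - 1, by omega⟩ else 0) := by
  rw [jacobiMatrix_row_eq a b c hi]
  split_ifs <;> simp only [add_dotProduct, single_dotProduct, zero_dotProduct] <;> ring

theorem jacobiMatrix_dotProduct_eval (a b c : ℕ → K) (p : Fin m → K[X]) {i : Fin m}
    (hi : (i : ℕ) + 1 < m)
    (hrec : p ⟨i + 1, hi⟩ = (C (a i) * X + C (b i)) * p i +
      C (c i) * if h : 1 ≤ (i : ℕ) then p ⟨i - 1, by omega⟩ else 0)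
    (ha : a i ≠ 0) (x : K) :
    jacobiMatrix m a b c i ⬝ᵥ (fun k => (p k).eval x) = x * (p i).eval x := by
  rw [jacobiMatrix_dotProduct a b c _ hi, hrec]
  split_ifs <;> simp only [eval_add, eval_mul, eval_C, eval_X, eval_zero] <;> field_simp <;> ring

theorem jacobiMatrix_mul_sub_mul_diagonal_apply {n : ℕ} (a b c : ℕ → K) (p : Fin m → K[X])
    (lam : Fin n → K) (M : Matrix (Fin m) (Fin n) K) (hM : ∀ i j, M i j = (p i).eval (lam j))
    {i : Fin m} (hi : (i : ℕ) + 1 < m)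
    (hrec : p ⟨i + 1, hi⟩ = (C (a i) * X + C (b i)) * p i +
      C (c i) * if h : 1 ≤ (i : ℕ) then p ⟨i - 1, by omega⟩ else 0)
    (ha : a i ≠ 0) (j : Fin n) :
    (jacobiMatrix m a b c * M - M * diagonal lam) i j = 0 := by
  rw [Matrix.sub_apply, mul_diagonal, Matrix.mul_apply', sub_eq_zero]
  simp only [hM]
  exact (jacobiMatrix_dotProduct_eval a b c p hi hrec ha _).trans (mul_comm _ _)

end Jacobi

/-- **Orthogonal polynomial transforms have displacement rank 1 with respect to a
tridiagonal operator and a diagonal operator.**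
If the polynomials `p₀, …, p_{m-1}` satisfy the three-term recurrence
`p_{i+1} = (aᵢ X + bᵢ) pᵢ + cᵢ p_{i-1}` (with `p_{-1} = 0`) for `0 ≤ i ≤ m-2`, with
`aᵢ ≠ 0`, and `M` is the polynomial transform matrix `M i j = pᵢ(λⱼ)`, then there is a
tridiagonal matrix `A` such that `A*M - M*diag(λ)` is nonzero only in its last row; in
particular its rank is at most 1. -/
theorem orthogonal_polynomial_transform_displacement (m n : ℕ)
    (a b c : ℕ → ℝ) (ha : ∀ i, a i ≠ 0)
    (p : Fin m → Polynomial ℝ)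
    (hrec : ∀ (i : ℕ) (hi : i + 1 < m),
      p ⟨i + 1, hi⟩ =
        (Polynomial.C (a i) * Polynomial.X + Polynomial.C (b i)) * p ⟨i, by omega⟩ +
          Polynomial.C (c i) * (if h1 : 1 ≤ i then p ⟨i - 1, by omega⟩ else 0))
    (lam : Fin n → ℝ)
    (M : Matrix (Fin m) (Fin n) ℝ)
    (hM : ∀ i j, M i j = (p i).eval (lam j)) :
    ∃ A : Matrix (Fin m) (Fin m) ℝ,
      (∀ i j : Fin m, ((i : ℤ) - (j : ℤ)).natAbs > 1 → A i j = 0) ∧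
      (∀ (i : Fin m) (j : Fin n), (i : ℕ) ≠ m - 1 →
          (A * M - M * Matrix.diagonal lam) i j = 0) ∧
      (A * M - M * Matrix.diagonal lam).rank ≤ 1 := by
  have hrow : ∀ (i : Fin m) (j : Fin n), (i : ℕ) ≠ m - 1 →
      (jacobiMatrix m a b c * M - M * diagonal lam) i j = 0 := by
    intro i j hi
    have hi1 : (i : ℕ) + 1 < m := by omega
    exact jacobiMatrix_mul_sub_mul_diagonal_apply a b c p lam M hM hi1 (hrec i hi1) (ha i) j
  refine ⟨jacobiMatrix m a b c, fun i j => jacobiMatrix_apply_eq_zero a b c, hrow, ?_⟩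
  calc _ ≤ (Finset.univ.filter fun i : Fin m => (i : ℕ) = m - 1).card :=
        rank_le_card_of_forall_notMem_eq_zero _ _ fun i hi => funext fun j =>
          hrow i j (by simpa using hi)
    _ ≤ 1 := Finset.card_le_one.mpr fun i hi j hj => Fin.ext (by simp_all)
end
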